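/- arXiv:dg-ga/9407003 — 3 statements merged into one kernel-verified Lean document; each statement's English description precedes it below -/
import Mathlib

section
/- Let (M, ω) be a symplectic manifold with a Hamiltonian G-action and equivariant momentum map F: M → 𝔤*, x ∈ M, α = F(x). Then the intersection of the symplectic perpendicular of the orbit tangent space with the orbit tangent space is the tangent space of the G_α-orbit: T_x(G·x)^ω ∩ T_x(G·x) = T_x(G_α·x), where G_α is the coadjoint isotropy group of α. -/
/-! The momentum map relation and equivariance together say that on orbit directions the
symplectic form is the Kirillov–Kostant–Souriau form, `ω (ξ_M η) (ξ_M ξ) = α ⁅η, ξ⁆`.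
So `ξ_M η` is `ω`-orthogonal to the whole orbit exactly when `α ∘ ad η = 0`, i.e. when `η`
lies in the isotropy algebra of `α`. -/

section MomentumMap

variable {𝔤 T : Type*} [LieRing 𝔤] [LieAlgebra ℝ 𝔤] [AddCommGroup T] [Module ℝ T]
  {ω : T →ₗ[ℝ] T →ₗ[ℝ] ℝ} {ξM : 𝔤 →ₗ[ℝ] T} {dF : T →ₗ[ℝ] Module.Dual ℝ 𝔤}
  {α : Module.Dual ℝ 𝔤}

theorem form_orbit_eq_lie (hmom : ∀ (ξ : 𝔤) (v : T), ω (ξM ξ) v = dF v ξ)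
    (hequiv : ∀ ξ η : 𝔤, dF (ξM η) ξ = α ⁅ξ, η⁆) (η ξ : 𝔤) :
    ω (ξM η) (ξM ξ) = α ⁅η, ξ⁆ := by
  rw [hmom, hequiv]

theorem form_orbit_eq_zero_iff_mem_isotropy
    (hmom : ∀ (ξ : 𝔤) (v : T), ω (ξM ξ) v = dF v ξ)
    (hequiv : ∀ ξ η : 𝔤, dF (ξM η) ξ = α ⁅ξ, η⁆) (η : 𝔤) :
    (∀ w ∈ Set.range ξM, ω (ξM η) w = 0) ↔ ∀ ξ : 𝔤, α ⁅ξ, η⁆ = 0 := by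
  simp only [Set.forall_mem_range, form_orbit_eq_lie hmom hequiv]
  refine forall_congr' fun ξ => ?_
  rw [← lie_skew, map_neg, neg_eq_zero]

end MomentumMap

theorem stmt_8_general {𝔤 T : Type*} [LieRing 𝔤] [LieAlgebra ℝ 𝔤]
    [AddCommGroup T] [Module ℝ T]
    (ω : T →ₗ[ℝ] T →ₗ[ℝ] ℝ)
    (ξM : 𝔤 →ₗ[ℝ] T)
    (dF : T →ₗ[ℝ] Module.Dual ℝ 𝔤)
    (α : Module.Dual ℝ 𝔤)
    (hmom : ∀ (ξ : 𝔤) (v : T), ω (ξM ξ) v = dF v ξ)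
    (hequiv : ∀ ξ η : 𝔤, dF (ξM η) ξ = α ⁅ξ, η⁆) :
    {v : T | v ∈ Set.range ξM ∧ ∀ w ∈ Set.range ξM, ω v w = 0}
      = ξM '' {η : 𝔤 | ∀ ξ : 𝔤, α ⁅ξ, η⁆ = 0} := by
  ext v
  constructor
  · rintro ⟨⟨η, rfl⟩, hperp⟩
    exact ⟨η, (form_orbit_eq_zero_iff_mem_isotropy hmom hequiv η).1 hperp, rfl⟩
  · rintro ⟨η, hη, rfl⟩
    exact ⟨⟨η, rfl⟩, (form_orbit_eq_zero_iff_mem_isotropy hmom hequiv η).2 hη⟩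

/-- Pointwise form: the intersection of the symplectic perpendicular of
the orbit tangent space `T_x(G·x) = range ξ_M` with the orbit tangent space equals
the tangent space `T_x(G_α·x)` of the orbit of the coadjoint isotropy algebra
`𝔤_α = {η : ad*_η α = 0}`. -/
theorem stmt_8 {𝔤 T : Type*} [LieRing 𝔤] [LieAlgebra ℝ 𝔤]
    [AddCommGroup T] [Module ℝ T]
    (ω : T →ₗ[ℝ] T →ₗ[ℝ] ℝ)
    (hanti : ∀ u v : T, ω u v = - ω v u)
    (ξM : 𝔤 →ₗ[ℝ] T)
    (dF : T →ₗ[ℝ] Module.Dual ℝ 𝔤)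
    (α : Module.Dual ℝ 𝔤)
    (hmom : ∀ (ξ : 𝔤) (v : T), ω (ξM ξ) v = dF v ξ)
    (hequiv : ∀ ξ η : 𝔤, dF (ξM η) ξ = α ⁅ξ, η⁆) :
    {v : T | v ∈ Set.range ξM ∧ ∀ w ∈ Set.range ξM, ω v w = 0}
      = ξM '' {η : 𝔤 | ∀ ξ : 𝔤, α ⁅ξ, η⁆ = 0} :=
  stmt_8_general ω ξM dF α hmom hequiv
end

section
/- Let (V, ω) be a finite-dimensional symplectic vector space and X ⊆ V a subspace with null space ν = X ∩ X^ω. Then V is symplectically isomorphic to the direct sum E ⊕ N ⊕ (ν ⊕ ν*), where E = X/ν with the form induced by ω, N = X^ω/ν with the form induced by ω, and ν ⊕ ν* carries the canonical symplectic form ω_{ν⊕ν*}((v,l),(v',l')) = l'(v) - l(v'). -/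
/-!
Choose complements `W` of `ν = X ∩ X^ω` in `X` and `Y` of `ν` in `X^ω`. The form is
nondegenerate on `W` and on `Y`, and `W ⟂ Y`, so `V` splits `ω`-orthogonally as `W ⊕ Y ⊕ P`
with `P = W^ω ∩ Y^ω`, where `W ≅ X/ν` and `Y ≅ X^ω/ν` carry the induced forms. In `P` the
null space `ν` is Lagrangian; a complement `C` of `ν` in `P`, shifted by half of the form
along `ν` so that it becomes isotropic, identifies `P` with `ν ⊕ ν*`. The resulting map to
`X/ν × X^ω/ν × (ν × ν*)` is injective by nondegeneracy and bijective by a dimension count.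
-/

/-- The symplectic perpendicular of a subspace `X` with respect to a bilinear form. -/
def sympPerp {V : Type*} [AddCommGroup V] [Module ℝ V]
    (ω : V →ₗ[ℝ] V →ₗ[ℝ] ℝ) (X : Submodule ℝ V) : Submodule ℝ V where
  carrier := {v : V | ∀ x ∈ X, ω v x = 0}
  add_mem' := by
    intro a b ha hb x hx
    simp [map_add, ha x hx, hb x hx]
  zero_mem' := by
    intro x hx
    simp
  smul_mem' := by
    intro c a ha x hx
    simp [ha x hx]

open Module LinearMap
open LinearMap (BilinForm)

theorem Submodule.finrank_quotient_comap_subtype_add_finrank {K M : Type*} [Field K]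
    [AddCommGroup M] [Module K M] [FiniteDimensional K M] {p q : Submodule K M} (h : p ≤ q) :
    finrank K (q ⧸ p.comap q.subtype) + finrank K p = finrank K q := by
  rw [← (Submodule.comapSubtypeEquivOfLe h).finrank_eq, Submodule.finrank_quotient_add_finrank]

namespace LinearMap.BilinForm

variable {K M : Type*} [Field K] [AddCommGroup M] [Module K M]

theorem isRefl_of_apply_eq_neg {B : BilinForm K M} (hB : ∀ x y, B x y = -B y x) : B.IsRefl :=
  fun x y h => by rw [hB, h, neg_zero]

theorem exists_linearMap_apply_eq_of_restrict_nondegenerate [FiniteDimensional K M]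
    {B : BilinForm K M} (hB : B.IsRefl) {W : Submodule K M} (hW : (B.restrict W).Nondegenerate) :
    ∃ π : M →ₗ[K] W, ∀ v, ∀ w ∈ W, B w (π v) = B w v := by
  have hcompl := isCompl_orthogonal_of_restrict_nondegenerate hB hW
  refine ⟨W.projectionOnto _ hcompl, fun v w hw => ?_⟩
  conv_rhs => rw [← Submodule.projection_add_projection_eq_self hcompl v]
  rw [map_add, Submodule.projection_apply_mem hcompl.symm v w hw, add_zero]
  rfl

theorem exists_linearMap_apply_eq_add_of_orthogonal_eq [FiniteDimensional K M] [NeZero (2 : K)]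
    {B : BilinForm K M} (hB : ∀ x y, B x y = -B y x) (hsep : B.SeparatingLeft)
    {L : Submodule K M} (hL : B.orthogonal L = L) :
    ∃ a : M →ₗ[K] L, ∀ x y, B x y = B (a x) y + B x (a y) := by
  have hiso : ∀ n ∈ L, ∀ n' ∈ L, B n n' = 0 := fun n hn n' hn' =>
    (hL.symm ▸ hn' : n' ∈ B.orthogonal L) n hn
  obtain ⟨C, hC⟩ := L.exists_isCompl
  let g : L →ₗ[K] Dual K C := B.compl₁₂ L.subtype C.subtype
  have hg : Function.Injective g := by
    rw [← ker_eq_bot, ker_eq_bot']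
    intro n hn
    refine Subtype.ext (hsep n fun m => ?_)
    obtain ⟨l, hl, c, hc, rfl⟩ :=
      Submodule.mem_sup.1 (hC.sup_eq_top ▸ Submodule.mem_top : m ∈ L ⊔ C)
    rw [map_add, hiso n n.2 l hl, zero_add]
    exact LinearMap.congr_fun hn ⟨c, hc⟩
  have hg' : Function.Injective g.flip := by
    rw [← ker_eq_bot, ker_eq_bot']
    intro c hc
    have hcL : (c : M) ∈ L := hL ▸ fun n hn => LinearMap.congr_fun hc ⟨n, hn⟩
    exact Subtype.ext ((Submodule.disjoint_def.1 hC.disjoint) c hcL c.2)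
  have hdim : finrank K L = finrank K (Dual K C) := by
    have h₁ := LinearMap.finrank_le_finrank_of_injective hg
    have h₂ := LinearMap.finrank_le_finrank_of_injective hg'
    rw [Subspace.dual_finrank_eq] at h₁ h₂ ⊢
    omega
  -- `B (c - k c) (c' - k c') = 0`: shifting `C` by `-k` makes it an isotropic complement of `L`.
  obtain ⟨k, hk⟩ : ∃ k : C →ₗ[K] L, ∀ c c' : C, B (k c) c' = B c c' / 2 := by
    let gE := g.linearEquivOfInjective hg hdim
    refine ⟨gE.symm ∘ₗ ((2 : K)⁻¹ • B.compl₁₂ C.subtype C.subtype), fun c c' => ?_⟩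
    have := LinearMap.congr_fun
      (gE.apply_symm_apply ((2 : K)⁻¹ • B.compl₁₂ C.subtype C.subtype c)) c'
    rw [LinearMap.linearEquivOfInjective_apply] at this
    simpa [g, div_eq_inv_mul] using this
  refine ⟨L.projectionOnto C hC + k ∘ₗ C.projectionOnto L hC.symm, fun x y => ?_⟩
  obtain ⟨⟨n, c⟩, rfl⟩ := (L.prodEquivOfIsCompl C hC).surjective x
  obtain ⟨⟨n', c'⟩, rfl⟩ := (L.prodEquivOfIsCompl C hC).surjective y
  simp only [Submodule.coe_prodEquivOfIsCompl', map_add, LinearMap.add_apply, LinearMap.comp_apply,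
    Submodule.projectionOnto_apply_left, Submodule.projectionOnto_apply_right, add_zero, zero_add,
    map_zero, Submodule.coe_add]
  linear_combination -hiso n n.2 n' n'.2 - hiso _ (k c).2 n' n'.2 - hiso n n.2 _ (k c').2
    - hk c c' - hB c (k c') + hk c' c + hB c' c / 2 - add_halves (B c c')

theorem exists_linearMap_apply_eq_add_of_inf_orthogonal_eq [FiniteDimensional K M]
    [NeZero (2 : K)] {B : BilinForm K M} (hB : ∀ x y, B x y = -B y x) {P L : Submodule K M}
    (hP : ∀ p ∈ P, (∀ q ∈ P, B p q = 0) → p = 0) (hL : P ⊓ B.orthogonal L = L) :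
    ∃ a : M →ₗ[K] L, ∀ p ∈ P, ∀ q ∈ P, B p q = B (a p) q + B p (a q) := by
  have hLP : L ≤ P := hL ▸ inf_le_left
  have hL' : (B.restrict P).orthogonal (L.comap P.subtype) = L.comap P.subtype := by
    ext p
    conv_rhs => rw [Submodule.mem_comap, Submodule.coe_subtype, ← hL]
    exact ⟨fun hp => ⟨p.2, fun n hn => hp ⟨n, hLP hn⟩ hn⟩, fun hp n hn => hp.2 n hn⟩
  obtain ⟨a, ha⟩ := exists_linearMap_apply_eq_add_of_orthogonal_eq (B := B.restrict P)
    (fun x y => hB x y) (fun p hp => Subtype.ext (hP p p.2 fun q hq => hp ⟨q, hq⟩)) hL'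
  obtain ⟨a', ha'⟩ :=
    LinearMap.exists_extend ((Submodule.comapSubtypeEquivOfLe hLP).toLinearMap ∘ₗ a)
  have ha'_apply (p : P) : (a' p : M) = a p := congr(($(LinearMap.congr_fun ha' p) : M))
  refine ⟨a', fun p hp q hq => ?_⟩
  simpa [ha'_apply ⟨p, hp⟩, ha'_apply ⟨q, hq⟩] using ha ⟨p, hp⟩ ⟨q, hq⟩

end LinearMap.BilinForm

section Symplectic

variable {V : Type*} [AddCommGroup V] [Module ℝ V] {ω : V →ₗ[ℝ] V →ₗ[ℝ] ℝ}

theorem sympPerp_eq_orthogonal (hω : ω.IsRefl) (X : Submodule ℝ V) :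
    sympPerp ω X = BilinForm.orthogonal ω X := by
  ext v
  exact ⟨fun hv x hx => hω v x (hv x hx), fun hv x hx => hω x v (hv x hx)⟩

theorem sympPerp_sup (X Y : Submodule ℝ V) :
    sympPerp ω (X ⊔ Y) = sympPerp ω X ⊓ sympPerp ω Y := by
  ext v
  refine ⟨fun hv => ⟨fun x hx => hv x (Submodule.mem_sup_left hx),
    fun y hy => hv y (Submodule.mem_sup_right hy)⟩, fun ⟨hX, hY⟩ z hz => ?_⟩
  obtain ⟨x, hx, y, hy, rfl⟩ := Submodule.mem_sup.1 hz
  rw [map_add, hX x hx, hY y hy, add_zero]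

theorem restrict_nondegenerate_of_disjoint_of_sup_eq (hω : ω.IsRefl) {X W : Submodule ℝ V}
    (hdisj : Disjoint (X ⊓ sympPerp ω X) W) (hsup : X ⊓ sympPerp ω X ⊔ W = X) :
    (BilinForm.restrict ω W).Nondegenerate := by
  refine (IsRefl.domRestrict hω W).nondegenerate_iff_separatingLeft.2 fun w hw => ?_
  have hwX : (w : V) ∈ X := hsup ▸ Submodule.mem_sup_right w.2
  have hwperp : (w : V) ∈ sympPerp ω X := by
    rw [← hsup, sympPerp_sup]
    exact ⟨fun n hn => hω n w (hn.2 w hwX), fun x hx => hw ⟨x, hx⟩⟩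
  exact Subtype.ext (Submodule.disjoint_def.1 hdisj w ⟨hwX, hwperp⟩ w.2)

variable {W Y : Submodule ℝ V} {πW : V →ₗ[ℝ] W} {πY : V →ₗ[ℝ] Y}

theorem sub_sub_mem_sympPerp_inf_sympPerp (hω : ω.IsRefl) (hWY : ∀ x ∈ W, ∀ y ∈ Y, ω x y = 0)
    (hπW : ∀ v, ∀ x ∈ W, ω x (πW v) = ω x v) (hπY : ∀ v, ∀ y ∈ Y, ω y (πY v) = ω y v)
    (v : V) :
    v - πW v - πY v ∈ sympPerp ω W ⊓ sympPerp ω Y := by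
  refine ⟨fun x hx => hω _ _ ?_, fun y hy => hω _ _ ?_⟩
  · rw [map_sub, map_sub, hπW v x hx, hWY x hx _ (πY v).2, sub_self, sub_zero]
  · rw [map_sub, map_sub, hπY v y hy, hω _ _ (hWY _ (πW v).2 y hy), sub_zero,
      sub_self]

theorem apply_eq_add_add_of_orthogonal (hω : ω.IsRefl) (hWY : ∀ x ∈ W, ∀ y ∈ Y, ω x y = 0)
    (hπW : ∀ v, ∀ x ∈ W, ω x (πW v) = ω x v) (hπY : ∀ v, ∀ y ∈ Y, ω y (πY v) = ω y v)
    (v w : V) :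
    ω v w = ω (πW v) (πW w) + ω (πY v) (πY w) + ω (v - πW v - πY v) (w - πW w - πY w) := by
  obtain ⟨hvW, hvY⟩ := sub_sub_mem_sympPerp_inf_sympPerp hω hWY hπW hπY v
  obtain ⟨hwW, hwY⟩ := sub_sub_mem_sympPerp_inf_sympPerp hω hWY hπW hπY w
  have hYW : ω (πY v) (πW w) = 0 := hω _ _ (hWY _ (πW w).2 _ (πY v).2)
  calc ω v w
      = ω (πW v + πY v + (v - πW v - πY v)) (πW w + πY w + (w - πW w - πY w)) := by
        congr 2 <;> abel
    _ = _ := by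
      simp only [map_add, LinearMap.add_apply, hWY _ (πW v).2 _ (πY w).2, hYW,
        hω _ _ (hwW _ (πW v).2), hω _ _ (hwY _ (πY v).2), hvW _ (πW w).2, hvY _ (πY w).2]
      ring

variable [FiniteDimensional ℝ V]

theorem sympPerp_sympPerp (hω : ω.IsRefl) (hnd : ω.Nondegenerate) (X : Submodule ℝ V) :
    sympPerp ω (sympPerp ω X) = X := by
  rw [sympPerp_eq_orthogonal hω, sympPerp_eq_orthogonal hω,
    BilinForm.orthogonal_orthogonal hnd hω]

theorem finrank_add_finrank_sympPerp (hω : ω.IsRefl) (hnd : ω.Nondegenerate)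
    (X : Submodule ℝ V) : finrank ℝ X + finrank ℝ (sympPerp ω X) = finrank ℝ V := by
  rw [sympPerp_eq_orthogonal hω, BilinForm.finrank_orthogonal hnd]
  have := X.finrank_le
  omega

theorem sympPerp_inf_sympPerp_inf_orthogonal_eq (hω : ω.IsRefl) (hnd : ω.Nondegenerate)
    {X W Y : Submodule ℝ V} (hW : X ⊓ sympPerp ω X ⊔ W = X)
    (hY : X ⊓ sympPerp ω X ⊔ Y = sympPerp ω X) :
    sympPerp ω W ⊓ sympPerp ω Y ⊓ BilinForm.orthogonal ω (X ⊓ sympPerp ω X) =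
      X ⊓ sympPerp ω X := by
  rw [← sympPerp_eq_orthogonal hω]
  apply le_antisymm
  · rintro p ⟨⟨hpW, hpY⟩, hpν⟩
    constructor
    · rw [← sympPerp_sympPerp hω hnd X, ← hY, sympPerp_sup]
      exact ⟨hpν, hpY⟩
    · rw [← hW, sympPerp_sup]
      exact ⟨hpν, hpW⟩
  · rintro p ⟨hpX, hpN⟩
    refine ⟨⟨fun x hx => hpN x ?_, fun y hy => hω _ _ ((?_ : y ∈ sympPerp ω X) p hpX)⟩,
      fun n hn => hω _ _ (hn.2 p hpX)⟩
    · exact hW ▸ Submodule.mem_sup_right hx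
    · exact hY ▸ Submodule.mem_sup_right hy

theorem exists_sympPerp_decomposition (hω : ∀ v w, ω v w = -ω w v) (hsep : ω.SeparatingLeft)
    (X : Submodule ℝ V) :
    ∃ (πX : V →ₗ[ℝ] X) (πN : V →ₗ[ℝ] sympPerp ω X) (a : V →ₗ[ℝ] ↥(X ⊓ sympPerp ω X)),
      ∀ v w, ω v w = ω (πX v) (πX w) + ω (πN v) (πN w) + (ω (a v) w - ω (a w) v) := by
  have hrefl := BilinForm.isRefl_of_apply_eq_neg hω
  have hnd : ω.Nondegenerate := hrefl.nondegenerate_iff_separatingLeft.2 hsep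
  obtain ⟨W, hνW, hW⟩ :=
    IsModularLattice.exists_disjoint_and_sup_eq (inf_le_left : X ⊓ sympPerp ω X ≤ X)
  obtain ⟨Y, hνY, hY⟩ := IsModularLattice.exists_disjoint_and_sup_eq
    (inf_le_right : X ⊓ sympPerp ω X ≤ sympPerp ω X)
  have hνN : sympPerp ω X ⊓ sympPerp ω (sympPerp ω X) = X ⊓ sympPerp ω X := by
    rw [sympPerp_sympPerp hrefl hnd, inf_comm]
  obtain ⟨πW, hπW⟩ := BilinForm.exists_linearMap_apply_eq_of_restrict_nondegenerate hrefl
    (restrict_nondegenerate_of_disjoint_of_sup_eq hrefl hνW hW)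
  obtain ⟨πY, hπY⟩ := BilinForm.exists_linearMap_apply_eq_of_restrict_nondegenerate hrefl
    (restrict_nondegenerate_of_disjoint_of_sup_eq hrefl (hνN ▸ hνY) (hνN ▸ hY))
  have hWX : W ≤ X := hW ▸ le_sup_right
  have hYN : Y ≤ sympPerp ω X := hY ▸ le_sup_right
  have hWY : ∀ x ∈ W, ∀ y ∈ Y, ω x y = 0 := fun x hx y hy => hrefl _ _ (hYN hy x (hWX hx))
  have hr := sub_sub_mem_sympPerp_inf_sympPerp hrefl hWY hπW hπY
  have hP : ∀ p ∈ sympPerp ω W ⊓ sympPerp ω Y,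
      (∀ q ∈ sympPerp ω W ⊓ sympPerp ω Y, ω p q = 0) → p = 0 := fun p hp hpP => hsep p fun v => by
    rw [show v = πW v + πY v + (v - πW v - πY v) by abel, map_add, map_add, hp.1 _ (πW v).2,
      hp.2 _ (πY v).2, hpP _ (hr v), add_zero, add_zero]
  have hL := sympPerp_inf_sympPerp_inf_orthogonal_eq hrefl hnd hW hY
  obtain ⟨a, ha⟩ := BilinForm.exists_linearMap_apply_eq_add_of_inf_orthogonal_eq hω hP hL
  have hνP : ∀ (n : ↥(X ⊓ sympPerp ω X)) w, ω n (w - πW w - πY w) = ω n w := fun n w => by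
    have hn := (hL ▸ inf_le_left : X ⊓ sympPerp ω X ≤ _) n.2
    rw [map_sub, map_sub, hn.1 _ (πW w).2, hn.2 _ (πY w).2, sub_zero, sub_zero]
  let r : V →ₗ[ℝ] V := LinearMap.id - W.subtype ∘ₗ πW - Y.subtype ∘ₗ πY
  refine ⟨Submodule.inclusion hWX ∘ₗ πW, Submodule.inclusion hYN ∘ₗ πY, a ∘ₗ r,
    fun v w => ?_⟩
  rw [apply_eq_add_add_of_orthogonal hrefl hWY hπW hπY v w, ha _ (hr v) _ (hr w),
    hω (v - _ - _), hνP, hνP, ← sub_eq_add_neg]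
  rfl

end Symplectic

/-- For a subspace `X` of a symplectic vector space `(V, ω)` with null
space `ν = X ∩ X^ω`, the space `V` is symplectically isomorphic to
`E ⊕ N ⊕ (ν ⊕ ν*)` where `E = X/ν`, `N = X^ω/ν` carry the forms induced by `ω` and
`ν ⊕ ν*` carries the canonical symplectic form `((v,l),(v',l')) ↦ l'(v) - l(v')`. -/
theorem stmt_10 {V : Type*} [AddCommGroup V] [Module ℝ V] [FiniteDimensional ℝ V]
    (ω : V →ₗ[ℝ] V →ₗ[ℝ] ℝ)
    (hanti : ∀ v w : V, ω v w = - ω w v)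
    (hnd : ∀ v : V, v ≠ 0 → ∃ w : V, ω v w ≠ 0)
    (X : Submodule ℝ V)
    (ωE : (↥X ⧸ (X ⊓ sympPerp ω X).comap X.subtype) →ₗ[ℝ]
          (↥X ⧸ (X ⊓ sympPerp ω X).comap X.subtype) →ₗ[ℝ] ℝ)
    (hωE : ∀ x y : X,
      ωE (Submodule.mkQ ((X ⊓ sympPerp ω X).comap X.subtype) x)
         (Submodule.mkQ ((X ⊓ sympPerp ω X).comap X.subtype) y) = ω x y)
    (ωN : (↥(sympPerp ω X) ⧸ (X ⊓ sympPerp ω X).comap (sympPerp ω X).subtype) →ₗ[ℝ]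
          (↥(sympPerp ω X) ⧸ (X ⊓ sympPerp ω X).comap (sympPerp ω X).subtype) →ₗ[ℝ] ℝ)
    (hωN : ∀ x y : sympPerp ω X,
      ωN (Submodule.mkQ ((X ⊓ sympPerp ω X).comap (sympPerp ω X).subtype) x)
         (Submodule.mkQ ((X ⊓ sympPerp ω X).comap (sympPerp ω X).subtype) y) = ω x y) :
    ∃ e : V ≃ₗ[ℝ]
        (↥X ⧸ (X ⊓ sympPerp ω X).comap X.subtype) ×
        (↥(sympPerp ω X) ⧸ (X ⊓ sympPerp ω X).comap (sympPerp ω X).subtype) ×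
        (↥(X ⊓ sympPerp ω X) × Module.Dual ℝ ↥(X ⊓ sympPerp ω X)),
      ∀ v w : V,
        ω v w = ωE (e v).1 (e w).1 + ωN (e v).2.1 (e w).2.1 +
          ((e w).2.2.2 (e v).2.2.1 - (e v).2.2.2 (e w).2.2.1) := by
  have hsep : ω.SeparatingLeft := fun v hv =>
    by_contra fun h => (hnd v h).elim fun w hw => hw (hv w)
  have hrefl := BilinForm.isRefl_of_apply_eq_neg hanti
  obtain ⟨πX, πN, a, hdecomp⟩ := exists_sympPerp_decomposition hanti hsep X
  let e := (((X ⊓ sympPerp ω X).comap X.subtype).mkQ ∘ₗ πX).prod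
    ((((X ⊓ sympPerp ω X).comap (sympPerp ω X).subtype).mkQ ∘ₗ πN).prod
      (a.prod ((X ⊓ sympPerp ω X).subtype.dualMap ∘ₗ ω.flip)))
  have he (v w : V) : ω v w = ωE (e v).1 (e w).1 + ωN (e v).2.1 (e w).2.1 +
      ((e w).2.2.2 (e v).2.2.1 - (e v).2.2.2 (e w).2.2.1) := by
    rw [hdecomp v w]
    simp only [e, LinearMap.prod_apply, Function.prod_apply, LinearMap.comp_apply, hωE, hωN,
      LinearMap.dualMap_apply, LinearMap.flip_apply, Submodule.coe_subtype]
  have hinj : Function.Injective e := by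
    rw [← LinearMap.ker_eq_bot, LinearMap.ker_eq_bot']
    exact fun v hv => hsep v fun w => by
      rw [he v w, hv]
      simp only [Prod.fst_zero, Prod.snd_zero, map_zero, LinearMap.zero_apply, add_zero, sub_zero]
  refine ⟨e.linearEquivOfInjective hinj ?_, he⟩
  have hX := Submodule.finrank_quotient_comap_subtype_add_finrank
    (inf_le_left : X ⊓ sympPerp ω X ≤ X)
  have hN := Submodule.finrank_quotient_comap_subtype_add_finrank
    (inf_le_right : X ⊓ sympPerp ω X ≤ sympPerp ω X)
  have := finrank_add_finrank_sympPerp hrefl (hrefl.nondegenerate_iff_separatingLeft.2 hsep) X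
  simp only [Module.finrank_prod, Subspace.dual_finrank_eq]
  omega
end

section
/- Let a Lie group G act properly on a symplectic manifold (M, ω) preserving ω, with Hamiltonian action and equivariant momentum map F: M → 𝔤*. Let H ⊆ G be the isotropy group of a point x ∈ M with α = F(x), 𝔥 = Lie(H). Then the image of the connected component of x in the fixed submanifold M_H = {m : G_m = H} under F lies in the affine subspace α + 𝔥° where 𝔥° is the annihilator of 𝔥 in 𝔤*: for all y in that component, F(y) - α annihilates 𝔥. -/
/-! Along a path `γ` in `M_H`, the derivative of `t ↦ ⟨ξ, F (γ t)⟩` is `ω(ξ_M, γ')`, which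
vanishes for `ξ ∈ 𝔥` because `ξ_M = 0` on `M_H`; so the pairing is constant along `γ`. -/

theorem fderiv_apply_eq_zero_of_fundamentalField_eq_zero {E 𝔤 : Type*} [NormedAddCommGroup E]
    [NormedSpace ℝ E] [NormedAddCommGroup 𝔤] [NormedSpace ℝ 𝔤]
    {F : E → (𝔤 →L[ℝ] ℝ)} {ω : E → E →ₗ[ℝ] E →ₗ[ℝ] ℝ} {ξM : 𝔤 → E → E}
    (hmom : ∀ (z : E) (v : E) (ξ : 𝔤), (fderiv ℝ F z v) ξ = ω z (ξM ξ z) v)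
    {z : E} {ξ : 𝔤} (hz : ξM ξ z = 0) (v : E) :
    fderiv ℝ F z v ξ = 0 := by
  rw [hmom, hz, map_zero, LinearMap.zero_apply]

theorem apply_comp_eq_of_fderiv_apply_eq_zero {E 𝔤 G : Type*} [NormedAddCommGroup E]
    [NormedSpace ℝ E] [NormedAddCommGroup 𝔤] [NormedSpace ℝ 𝔤]
    [NormedAddCommGroup G] [NormedSpace ℝ G]
    {F : E → (𝔤 →L[ℝ] G)} (hF : Differentiable ℝ F) {γ : ℝ → E} (hγ : Differentiable ℝ γ)
    {ξ : 𝔤} (h : ∀ t, fderiv ℝ F (γ t) (deriv γ t) ξ = 0) (a b : ℝ) :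
    F (γ a) ξ = F (γ b) ξ := by
  have hderiv : ∀ t, HasDerivAt (fun s => F (γ s) ξ) 0 t := fun t => by
    have := ((hF (γ t)).hasFDerivAt.comp_hasDerivAt t (hγ t).hasDerivAt).clm_apply
      (hasDerivAt_const t ξ)
    simpa [h t] using this
  exact is_const_of_deriv_eq_zero (fun t => (hderiv t).differentiableAt)
    (fun t => (hderiv t).deriv) a b

/-- (chart version) If `F` is an equivariant momentum map,
`M_H` the set of points with isotropy exactly `H` (so the vector fields `ξ_M`,
`ξ ∈ 𝔥 = Lie(H)`, vanish on `M_H`), then along the connected component of `x` in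
`M_H` (here: along any differentiable path in `M_H` from `x` to `y`) the momentum
map differs from `α = F(x)` by an element of the annihilator of `𝔥`:
`⟨ξ, F(y)⟩ = ⟨ξ, F(x)⟩` for all `ξ ∈ 𝔥`. -/
theorem stmt_15 {E 𝔤 : Type*} [NormedAddCommGroup E] [NormedSpace ℝ E]
    [NormedAddCommGroup 𝔤] [NormedSpace ℝ 𝔤]
    (F : E → (𝔤 →L[ℝ] ℝ)) (hFdiff : Differentiable ℝ F)
    (ω : E → E →ₗ[ℝ] E →ₗ[ℝ] ℝ)
    (ξM : 𝔤 → E → E)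
    (𝔥 : Submodule ℝ 𝔤)
    (MH : Set E)
    (hmom : ∀ (z : E) (v : E) (ξ : 𝔤), (fderiv ℝ F z v) ξ = ω z (ξM ξ z) v)
    (hfix : ∀ z ∈ MH, ∀ ξ ∈ 𝔥, ξM ξ z = 0)
    (x y : E) (γ : ℝ → E) (hγ : Differentiable ℝ γ)
    (hγ0 : γ 0 = x) (hγ1 : γ 1 = y) (hγMH : ∀ t : ℝ, γ t ∈ MH) :
    ∀ ξ ∈ 𝔥, F y ξ = F x ξ := by
  intro ξ hξ
  rw [← hγ0, ← hγ1]
  exact apply_comp_eq_of_fderiv_apply_eq_zero hFdiff hγ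
    (fun t => fderiv_apply_eq_zero_of_fundamentalField_eq_zero hmom (hfix _ (hγMH t) ξ hξ) _) 1 0
end
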